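/- arXiv:0901.0443 — 3 statements merged into one kernel-verified Lean document; each statement's English description precedes it below -/
import Mathlib

section
/- For every multisegment ψ and every i ∈ ℤ/eℤ, one has f̃_i ψ = (f̂_{−i}(ψ^ρ))^ρ; that is, the operators f̃_i and ρ ∘ f̂_{−i} ∘ ρ coincide on multisegments. -/
namespace AffineA

/-- A multisegment: a multiset of segments, each recorded as a pair
(head, length) with head in `ZMod e` and (positive) length in `ℕ`. -/
abbrev Multisegment (e : ℕ) := Multiset (ZMod e × ℕ)

variable {e : ℕ}

/-- Every segment occurring in the multisegment has positive length
(part of the definition of a multisegment). -/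
def Proper (ψ : Multisegment e) : Prop := ∀ p ∈ ψ, 0 < p.2

/-- A multisegment is aperiodic if for every length `l > 0` some residue `i`
carries no segment `[i;l)`. -/
def Aperiodic (ψ : Multisegment e) : Prop :=
  ∀ l : ℕ, 0 < l → ∃ i : ZMod e, ψ.count (i, l) = 0

/-- The segment with tail `t` and length `l`, written in (head, length) form:
`(l;t] = [t-l+1;l)`. -/
def seg (t : ZMod e) (l : ℕ) : ZMod e × ℕ := (t - (l : ZMod e) + 1, l)

/-- A letter of the words used in the cancellation process: `false` = R,
`true` = A, labelled by its length. -/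
abbrev Letter := Bool × ℕ

/-- One step of the stack-based cancellation of factors `RA`: an incoming `A`
cancels a pending `R`. The stack holds the reduced word so far, in reversed
order (first entry = rightmost letter). -/
def step : List Letter → Letter → List Letter
  | (false, _) :: rest, (true, _) => rest
  | s, x => x :: s

/-- The reduced word obtained by deleting factors `RA` as many times as
possible, in reversed order (first entry = rightmost letter). -/
def reduce (w : List Letter) : List Letter := w.foldl step []

/-- The word `∏_{l=1}^{N} R^{fR l} A^{fA l}` (letters listed for `l = 1, 2, …`
from left to right, each letter labelled by its length). -/
def word (N : ℕ) (fR fA : ℕ → ℕ) : List Letter :=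
  (List.range N).flatMap fun k =>
    List.replicate (fR (k + 1)) ((false : Bool), k + 1) ++
      List.replicate (fA (k + 1)) ((true : Bool), k + 1)

/-- A bound exceeding the length of every segment of `ψ`. -/
def bound (ψ : Multisegment e) : ℕ := (ψ.map Prod.snd).sum + 1

/-- The word `w_i(ψ) = ∏_{l ≥ 1} R^{m_{(l;i]}} A^{m_{(l;i-1]}}`. -/
def wTil (ψ : Multisegment e) (i : ZMod e) : List Letter :=
  word (bound ψ) (fun l => ψ.count (seg i l)) (fun l => ψ.count (seg (i - 1) l))

/-- The word `ŵ_i(ψ) = ∏_{l ≥ 1} R̂^{m_{[i;l)}} Â^{m_{[i+1;l)}}`. -/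
def wHat (ψ : Multisegment e) (i : ZMod e) : List Letter :=
  word (bound ψ) (fun l => ψ.count (i, l)) (fun l => ψ.count (i + 1, l))

/-- `a_i(ψ)`: number of letters `A` in the reduced word of `w_i(ψ)`. -/
def aTil (ψ : Multisegment e) (i : ZMod e) : ℕ :=
  ((reduce (wTil ψ i)).filter fun x => x.1).length

/-- `r_i(ψ)`: number of letters `R` in the reduced word of `w_i(ψ)`. -/
def rTil (ψ : Multisegment e) (i : ZMod e) : ℕ :=
  ((reduce (wTil ψ i)).filter fun x => !x.1).length

/-- `l_{0,i}(ψ)`: length label of the rightmost letter `A` of the reduced word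
of `w_i(ψ)`, and `0` if there is no letter `A`. -/
def l0Til (ψ : Multisegment e) (i : ZMod e) : ℕ :=
  (((reduce (wTil ψ i)).filter fun x => x.1).headI).2

/-- `â_i(ψ)`: number of letters `Â` in the reduced word of `ŵ_i(ψ)`. -/
def aHat (ψ : Multisegment e) (i : ZMod e) : ℕ :=
  ((reduce (wHat ψ i)).filter fun x => x.1).length

/-- `r̂_i(ψ)`: number of letters `R̂` in the reduced word of `ŵ_i(ψ)`. -/
def rHat (ψ : Multisegment e) (i : ZMod e) : ℕ :=
  ((reduce (wHat ψ i)).filter fun x => !x.1).length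

/-- `l̂_{0,i}(ψ)`: length label of the rightmost letter `Â` of the reduced word
of `ŵ_i(ψ)`, and `0` if there is no letter `Â`. -/
def l0Hat (ψ : Multisegment e) (i : ZMod e) : ℕ :=
  (((reduce (wHat ψ i)).filter fun x => x.1).headI).2

/-- The crystal operator `f̃_i`: adds `(1;i]` if `a_i(ψ) = 0`, and otherwise
replaces a segment `(l₀-1;i-1]` by `(l₀;i]` (nothing removed if `l₀ = 1`). -/
def ftil (i : ZMod e) (ψ : Multisegment e) : Multisegment e :=
  if aTil ψ i = 0 then ψ + {seg i 1}
  else if l0Til ψ i = 1 then ψ + {seg i 1}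
  else ψ + {seg i (l0Til ψ i)} - {seg (i - 1) (l0Til ψ i - 1)}

/-- The operator `f̂_i`: adds `[i;1)` if `â_i(ψ) = 0`, and otherwise replaces a
segment `[i+1;l̂₀-1)` by `[i;l̂₀)` (nothing removed if `l̂₀ = 1`). -/
def fhat (i : ZMod e) (ψ : Multisegment e) : Multisegment e :=
  if aHat ψ i = 0 then ψ + {((i : ZMod e), 1)}
  else if l0Hat ψ i = 1 then ψ + {((i : ZMod e), 1)}
  else ψ + {((i : ZMod e), l0Hat ψ i)} - {((i + 1 : ZMod e), l0Hat ψ i - 1)}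

/-- The involution `ρ`, sending each segment `[i;l)` to `(l;-i]`. -/
def rho (ψ : Multisegment e) : Multisegment e :=
  ψ.map fun p => (-p.1 - (p.2 : ZMod e) + 1, p.2)

def rhoSeg (p : ZMod e × ℕ) : ZMod e × ℕ := (-p.1 - (p.2 : ZMod e) + 1, p.2)

lemma rhoSeg_involutive : Function.Involutive (rhoSeg (e := e)) := by
  rintro ⟨j, l⟩
  simp only [rhoSeg, Prod.mk.injEq, and_true]
  ring

lemma rhoSeg_seg (t : ZMod e) (l : ℕ) : rhoSeg (seg t l) = (-t, l) := by
  simp only [rhoSeg, seg, Prod.mk.injEq, and_true]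
  ring

lemma rhoSeg_seg_sub_one (i : ZMod e) (l : ℕ) : rhoSeg (seg (i - 1) l) = (-i + 1, l) := by
  rw [rhoSeg_seg, neg_sub, sub_eq_neg_add]

lemma rho_eq_map (ψ : Multisegment e) : rho ψ = ψ.map rhoSeg := rfl

lemma count_rho (ψ : Multisegment e) (p : ZMod e × ℕ) :
    (rho ψ).count (rhoSeg p) = ψ.count p :=
  Multiset.count_map_eq_count' _ _ rhoSeg_involutive.injective p

lemma rho_rho (ψ : Multisegment e) : rho (rho ψ) = ψ := by
  rw [rho_eq_map, rho_eq_map, Multiset.map_map, rhoSeg_involutive.comp_self, Multiset.map_id]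

lemma rho_add (φ ψ : Multisegment e) : rho (φ + ψ) = rho φ + rho ψ :=
  Multiset.map_add _ _ _

lemma rho_sub (φ ψ : Multisegment e) : rho (φ - ψ) = rho φ - rho ψ := by
  ext q
  obtain ⟨p, rfl⟩ := rhoSeg_involutive.surjective q
  simp only [Multiset.count_sub, count_rho]

lemma rho_singleton (p : ZMod e × ℕ) : rho ({p} : Multisegment e) = {rhoSeg p} :=
  Multiset.map_singleton _ _

lemma bound_rho (ψ : Multisegment e) : bound (rho ψ) = bound ψ := by
  rw [bound, bound, rho_eq_map, Multiset.map_map]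
  rfl

-- Both operators are driven by the same reduced word: `ρ` preserves lengths and carries the
-- segments ending at `i`, `i - 1` to those starting at `-i`, `-i + 1`.
lemma wHat_rho_neg (ψ : Multisegment e) (i : ZMod e) : wHat (rho ψ) (-i) = wTil ψ i := by
  rw [wHat, wTil, bound_rho]
  congr 1
  · funext l
    rw [← rhoSeg_seg, count_rho]
  · funext l
    rw [← rhoSeg_seg_sub_one, count_rho]

lemma rho_ftil (ψ : Multisegment e) (i : ZMod e) : rho (ftil i ψ) = fhat (-i) (rho ψ) := by
  have ha : aHat (rho ψ) (-i) = aTil ψ i := by rw [aHat, aTil, wHat_rho_neg]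
  have hl : l0Hat (rho ψ) (-i) = l0Til ψ i := by rw [l0Hat, l0Til, wHat_rho_neg]
  rw [ftil, fhat, ha, hl]
  split_ifs
  · rw [rho_add, rho_singleton, rhoSeg_seg]
  · rw [rho_add, rho_singleton, rhoSeg_seg]
  · rw [rho_sub, rho_add, rho_singleton, rho_singleton, rhoSeg_seg_sub_one, rhoSeg_seg]

theorem ftil_eq_rho_fhat_rho_general (e : ℕ) (ψ : Multisegment e) (i : ZMod e) :
    ftil i ψ = rho (fhat (-i) (rho ψ)) := by
  rw [← rho_ftil, rho_rho]

/-- For every multisegment `ψ` and every `i ∈ ℤ/eℤ`,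
`f̃_i ψ = (f̂_{-i}(ψ^ρ))^ρ`. -/
theorem ftil_eq_rho_fhat_rho (e : ℕ) (he : 2 ≤ e) (ψ : Multisegment e)
    (hψ : Proper ψ) (i : ZMod e) :
    ftil i ψ = rho (fhat (-i) (rho ψ)) :=
  ftil_eq_rho_fhat_rho_general e ψ i

end AffineA
end

section
/- For every multicharge v ∈ V_l and every FLOTW l-partition λ ∈ Φ_e(v), the multisegment f_v(λ) is aperiodic; hence f_v defines a map from Φ_e(v) to Ψ_e. -/
/-!
A segment of length `k` occurs in `f_v(λ)` only through a part `λ^c_i = k`, and its tail is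
then the residue `(λ^c_i - i + v_c) mod e` of that part. The second FLOTW condition provides,
for each `k > 0`, a residue `r` that is the tail of no part of size `k`, so the segment
`(k;r]` does not occur in `f_v(λ)`.
-/

namespace AffineA

variable {e : ℕ}

/-- An `l`-partition, recorded with 0-indexed rows: `p c j` is the `(j+1)`-th
part `λ^c_{j+1}` of the partition `λ^c`; parts are weakly decreasing and
eventually zero. -/
def IsLPartition {l : ℕ} (p : Fin l → ℕ → ℕ) : Prop :=
  (∀ c j, p c (j + 1) ≤ p c j) ∧ ∀ c, ∃ B, ∀ j, B ≤ j → p c j = 0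

/-- A multicharge `v ∈ V_l`: weakly increasing with all differences `< e`. -/
def IsMulticharge (e : ℕ) {l : ℕ} (v : Fin l → ℤ) : Prop :=
  Monotone v ∧ ∀ c c' : Fin l, v c' - v c < e

/-- The FLOTW conditions on an `l`-partition for the multicharge `v`
(rows are 0-indexed: the paper's `λ^c_i` is `p c (i-1)`). -/
def FLOTW (e : ℕ) {l : ℕ} (v : Fin l → ℤ) (p : Fin l → ℕ → ℕ) : Prop :=
  IsLPartition p ∧
  (∀ (c : ℕ) (h : c + 1 < l) (j : ℕ),
    p ⟨c + 1, h⟩ (j + (v ⟨c + 1, h⟩ - v ⟨c, Nat.lt_of_succ_lt h⟩).toNat) ≤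
      p ⟨c, Nat.lt_of_succ_lt h⟩ j) ∧
  (∀ (hl : 0 < l) (j : ℕ),
    p ⟨0, hl⟩ (j + ((e : ℤ) + v ⟨0, hl⟩ - v ⟨l - 1, Nat.sub_lt hl Nat.one_pos⟩).toNat) ≤
      p ⟨l - 1, Nat.sub_lt hl Nat.one_pos⟩ j) ∧
  (∀ k : ℕ, 0 < k → ∃ r : ZMod e, ∀ (c : Fin l) (j : ℕ), p c j = k →
    (((k : ℤ) - ((j : ℤ) + 1) + v c : ℤ) : ZMod e) ≠ r)

/-- The multisegment `f_v(λ)`: each nonzero part `λ^c_i` contributes the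
segment with head `(1 - i + v_c) mod e` and length `λ^c_i` (here the part is
`p c j` with `i = j + 1`, so the head is `(v_c - j) mod e`). -/
noncomputable def fv (e : ℕ) {l : ℕ} (v : Fin l → ℤ) (p : Fin l → ℕ → ℕ) :
    Multisegment e :=
  ∑ᶠ (c : Fin l) (j : ℕ),
    if 0 < p c j then ({(((v c - (j : ℤ) : ℤ) : ZMod e), p c j)} : Multisegment e) else 0

-- No finiteness of support is needed: an infinitely supported `finsum` is `0`.
theorem _root_.Multiset.count_finsum_eq_zero {α ι : Type*} [DecidableEq α] {a : α}
    {f : ι → Multiset α} (h : ∀ i, (f i).count a = 0) : (∑ᶠ i, f i).count a = 0 :=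
  finsum_induction (fun s : Multiset α => s.count a = 0) (Multiset.count_zero a)
    (fun s t hs ht => by rw [Multiset.count_add, hs, ht]) h

theorem count_seg_fv_eq_zero {e l : ℕ} {v : Fin l → ℤ} {p : Fin l → ℕ → ℕ} {t : ZMod e}
    {k : ℕ} (h : ∀ c j, p c j = k → (((k : ℤ) - ((j : ℤ) + 1) + v c : ℤ) : ZMod e) ≠ t) :
    (fv e v p).count (seg t k) = 0 := by
  classical
  refine Multiset.count_finsum_eq_zero fun c => Multiset.count_finsum_eq_zero fun j => ?_
  split_ifs
  · rw [Multiset.count_singleton, if_neg]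
    intro hseg
    obtain ⟨hhead, hlen⟩ := Prod.mk.inj hseg
    refine h c j hlen.symm ?_
    push_cast at hhead ⊢
    linear_combination -hhead
  · exact Multiset.count_zero _

theorem fv_aperiodic_general (e : ℕ) {l : ℕ}
    (v : Fin l → ℤ)
    (p : Fin l → ℕ → ℕ) (hp : FLOTW e v p) :
    Aperiodic (fv e v p) := by
  intro k hk
  obtain ⟨r, hr⟩ := hp.2.2.2 k hk
  exact ⟨(seg r k).1, count_seg_fv_eq_zero hr⟩

/-- For every multicharge `v ∈ V_l` and every FLOTW `l`-partition `λ`, the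
multisegment `f_v(λ)` is aperiodic. -/
theorem fv_aperiodic (e : ℕ) (he : 2 ≤ e) {l : ℕ} (hl : 0 < l)
    (v : Fin l → ℤ) (hv : IsMulticharge e v)
    (p : Fin l → ℕ → ℕ) (hp : FLOTW e v p) :
    Aperiodic (fv e v p) :=
  fv_aperiodic_general e v p hp

end AffineA
end

section
/- For every multicharge v ∈ V_l, the map f_v : Φ_e(v) → Ψ_e is injective: if λ, μ ∈ Φ_e(v) satisfy f_v(λ) = f_v(μ), then λ = μ. -/
namespace AffineA

variable {e : ℕ}

/-! Fix a head `i`. The rows `(c, j)` of an `l`-partition whose segment has head `i` are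
totally ordered by `(j - v_c, c)`, and FLOTW condition (1) (with the partition condition) says
that the parts weakly decrease along this order. So for every `k ≥ 1` the rows of head `i` with
part at least `k` form an initial segment of that order, which is determined by its size, and
its size is the number of segments of `f_v(λ)` with head `i` and length at least `k`. -/

theorem _root_.Finset.eq_of_card_eq_of_downClosed {α β : Type*} [LinearOrder α] (κ : β → α)
    {R : Set β} {s t : Finset β} (hsR : ∀ x ∈ s, x ∈ R) (htR : ∀ x ∈ t, x ∈ R)
    (hs : ∀ x ∈ s, ∀ y ∈ R, κ y ≤ κ x → y ∈ s) (ht : ∀ x ∈ t, ∀ y ∈ R, κ y ≤ κ x → y ∈ t)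
    (hst : s.card = t.card) : s = t := by
  have htotal : s ⊆ t ∨ t ⊆ s := by
    by_contra! hne
    obtain ⟨x, hxs, hxt⟩ := Finset.not_subset.mp hne.1
    obtain ⟨y, hyt, hys⟩ := Finset.not_subset.mp hne.2
    rcases le_total (κ x) (κ y) with hxy | hyx
    · exact hxt (ht y hyt x (hsR x hxs) hxy)
    · exact hys (hs x hxs y (htR y hyt) hyx)
  rcases htotal with hst' | hts
  · exact Finset.eq_of_subset_of_card_le hst' hst.ge
  · exact (Finset.eq_of_subset_of_card_le hts hst.le).symm

section Rows

variable {l : ℕ}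

def rowHead (e : ℕ) (v : Fin l → ℤ) (x : Fin l × ℕ) : ZMod e := ((v x.1 - (x.2 : ℤ) : ℤ) : ZMod e)

/-- Inside one head class, consecutive rows for this order are exactly the pairs compared by
the two inequalities of FLOTW condition (1). -/
def rowKey (v : Fin l → ℤ) (x : Fin l × ℕ) : ℤ ×ₗ Fin l := toLex ((x.2 : ℤ) - v x.1, x.1)

def rowsAtLeast (e : ℕ) (v : Fin l → ℤ) (p : Fin l → ℕ → ℕ) (B : ℕ) (i : ZMod e) (k : ℕ) :
    Finset (Fin l × ℕ) :=
  (Finset.univ ×ˢ Finset.range B).filter fun x => rowHead e v x = i ∧ k ≤ p x.1 x.2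

variable {v : Fin l → ℤ} {p : Fin l → ℕ → ℕ} {B : ℕ}

lemma mem_rowsAtLeast (hB : ∀ c j, B ≤ j → p c j = 0) {i : ZMod e} {k : ℕ} (hk : 0 < k)
    {x : Fin l × ℕ} : x ∈ rowsAtLeast e v p B i k ↔ rowHead e v x = i ∧ k ≤ p x.1 x.2 := by
  simp only [rowsAtLeast, Finset.mem_filter, Finset.mem_product, Finset.mem_univ,
    Finset.mem_range, true_and, and_iff_right_iff_imp]
  intro ⟨_, hkp⟩
  by_contra! hBx
  have := hB x.1 x.2 hBx
  omega

lemma fv_eq_map (hB : ∀ c j, B ≤ j → p c j = 0) :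
    fv e v p = ((Finset.univ ×ˢ Finset.range B).filter fun x => 0 < p x.1 x.2).val.map
      fun x => (rowHead e v x, p x.1 x.2) := by
  have hsupp : ∀ c, (∑ᶠ j : ℕ, if 0 < p c j then
      ({(((v c - (j : ℤ) : ℤ) : ZMod e), p c j)} : Multisegment e) else 0) =
      ∑ j ∈ Finset.range B, if 0 < p c j then
        ({(((v c - (j : ℤ) : ℤ) : ZMod e), p c j)} : Multisegment e) else 0 := by
    intro c
    refine finsum_eq_sum_of_support_subset _ fun j hj => ?_
    by_contra hjB
    simp_all
  rw [fv, finsum_eq_sum_of_fintype, Finset.sum_congr rfl fun c _ => hsupp c,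
    ← Finset.sum_product', ← Finset.sum_filter]
  exact (congrArg Multiset.sum (Multiset.map_map (fun s => ({s} : Multisegment e))
    (fun x => (rowHead e v x, p x.1 x.2)) _).symm).trans (Multiset.sum_map_singleton _)

lemma card_rowsAtLeast (hB : ∀ c j, B ≤ j → p c j = 0) (i : ZMod e) {k : ℕ} (hk : 0 < k) :
    (rowsAtLeast e v p B i k).card =
      Multiset.card ((fv e v p).filter fun s => s.1 = i ∧ k ≤ s.2) := by
  rw [fv_eq_map hB, Multiset.filter_map, Multiset.card_map, ← Finset.filter_val,
    Finset.filter_filter, Finset.card_val, rowsAtLeast]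
  congr 1
  refine Finset.filter_congr fun x _ => ?_
  exact ⟨fun hx => ⟨hk.trans_le hx.2, hx⟩, And.right⟩

end Rows

section FLOTW

variable {l : ℕ} {v : Fin l → ℤ} {p : Fin l → ℕ → ℕ}

lemma FLOTW.le_of_le (hv : Monotone v) (hp : FLOTW e v p) {c c' : Fin l} (hcc' : c ≤ c')
    (j : ℕ) : p c' (j + (v c' - v c).toNat) ≤ p c j := by
  obtain ⟨c, hc⟩ := c
  obtain ⟨c', hc'⟩ := c'
  obtain ⟨d, rfl⟩ := Nat.exists_eq_add_of_le (Fin.mk_le_mk.mp hcc')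
  induction d with
  | zero => simp
  | succ d ih =>
    have hstep := hp.2.1 (c + d) hc' (j + (v ⟨c + d, by omega⟩ - v ⟨c, hc⟩).toNat)
    have hmono₁ : v ⟨c, hc⟩ ≤ v ⟨c + d, by omega⟩ := hv (Fin.mk_le_mk.mpr (by omega))
    have hmono₂ : v ⟨c + d, by omega⟩ ≤ v ⟨c + d + 1, hc'⟩ := hv (Fin.mk_le_mk.mpr (by omega))
    calc p ⟨c + d + 1, hc'⟩ (j + (v ⟨c + d + 1, hc'⟩ - v ⟨c, hc⟩).toNat)
        = p ⟨c + d + 1, hc'⟩ (j + (v ⟨c + d, by omega⟩ - v ⟨c, hc⟩).toNat +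
            (v ⟨c + d + 1, hc'⟩ - v ⟨c + d, by omega⟩).toNat) := by
          congr 1; omega
      _ ≤ p ⟨c + d, by omega⟩ (j + (v ⟨c + d, by omega⟩ - v ⟨c, hc⟩).toNat) := hstep
      _ ≤ p ⟨c, hc⟩ j := ih (by omega) (Fin.mk_le_mk.mpr (by omega))

lemma FLOTW.le_wrap (hv : IsMulticharge e v) (hp : FLOTW e v p) (c c' : Fin l) (j : ℕ) :
    p c' (j + ((e : ℤ) + v c' - v c).toNat) ≤ p c j := by
  have hl : 0 < l := c.pos
  set last : Fin l := ⟨l - 1, Nat.sub_lt hl Nat.one_pos⟩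
  set first : Fin l := ⟨0, hl⟩
  have hc : c ≤ last := Fin.mk_le_mk.mpr (by omega)
  have hc' : first ≤ c' := Fin.mk_le_mk.mpr (Nat.zero_le _)
  have hmono₁ := hv.1 hc
  have hmono₂ := hv.1 hc'
  have hspread := hv.2 first last
  set j₁ := j + (v last - v c).toNat
  set j₂ := j₁ + ((e : ℤ) + v first - v last).toNat
  calc p c' (j + ((e : ℤ) + v c' - v c).toNat) = p c' (j₂ + (v c' - v first).toNat) := by
        congr 1; omega
    _ ≤ p first j₂ := hp.le_of_le hv.1 hc' j₂
    _ ≤ p last j₁ := hp.2.2.1 hl j₁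
    _ ≤ p c j := hp.le_of_le hv.1 hc j

lemma FLOTW.antitone_rowKey (hv : IsMulticharge e v) (hp : FLOTW e v p)
    {x y : Fin l × ℕ} (hxy : rowHead e v x = rowHead e v y) (hκ : rowKey v x ≤ rowKey v y) :
    p y.1 y.2 ≤ p x.1 x.2 := by
  obtain ⟨c, j⟩ := x
  obtain ⟨c', j'⟩ := y
  have hdvd : (e : ℤ) ∣ ((j' : ℤ) - v c') - ((j : ℤ) - v c) := by
    have hneg : ((j' : ℤ) - v c') - ((j : ℤ) - v c) = -((v c' - j') - (v c - j)) := by ring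
    rw [hneg, dvd_neg]
    exact (ZMod.intCast_eq_intCast_iff_dvd_sub _ _ _).mp hxy
  have hκ' : (j : ℤ) - v c < j' - v c' ∨ (j : ℤ) - v c = j' - v c' ∧ c ≤ c' :=
    Prod.Lex.toLex_le_toLex.mp hκ
  have hanti : Antitone (p c') := antitone_nat_of_succ_le (hp.1.1 c')
  rcases le_or_gt c c' with hcc' | hc'c
  · have hmono := hv.1 hcc'
    calc p c' j' ≤ p c' (j + (v c' - v c).toNat) := hanti (by omega)
      _ ≤ p c j := hp.le_of_le hv.1 hcc' j
  · have hpos : 0 < ((j' : ℤ) - v c') - ((j : ℤ) - v c) := by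
      rcases hκ' with hlt | ⟨_, hcc'⟩
      · omega
      · exact absurd hcc' hc'c.not_ge
    have hgap := Int.le_of_dvd hpos hdvd
    have hspread := hv.2 c' c
    calc p c' j' ≤ p c' (j + ((e : ℤ) + v c' - v c).toNat) := hanti (by omega)
      _ ≤ p c j := hp.le_wrap hv c c' j

lemma IsLPartition.exists_bound (hp : IsLPartition p) : ∃ B, ∀ c j, B ≤ j → p c j = 0 := by
  choose B hB using hp.2
  exact ⟨Finset.univ.sup B, fun c j hj => hB c j ((Finset.le_sup (Finset.mem_univ c)).trans hj)⟩

lemma FLOTW.mem_rowsAtLeast_of_rowKey_le (hv : IsMulticharge e v) (hp : FLOTW e v p) {B : ℕ}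
    (hB : ∀ c j, B ≤ j → p c j = 0) {i : ZMod e} {k : ℕ} (hk : 0 < k) {x y : Fin l × ℕ}
    (hx : x ∈ rowsAtLeast e v p B i k) (hy : rowHead e v y = i) (hκ : rowKey v y ≤ rowKey v x) :
    y ∈ rowsAtLeast e v p B i k := by
  rw [mem_rowsAtLeast hB hk] at hx ⊢
  exact ⟨hy, hx.2.trans (hp.antitone_rowKey hv (hy.trans hx.1.symm) hκ)⟩

end FLOTW

theorem fv_injective_general (e : ℕ) {l : ℕ}
    (v : Fin l → ℤ) (hv : IsMulticharge e v)
    (p q : Fin l → ℕ → ℕ) (hp : FLOTW e v p) (hq : FLOTW e v q)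
    (h : fv e v p = fv e v q) :
    p = q := by
  obtain ⟨Bp, hBp⟩ := hp.1.exists_bound
  obtain ⟨Bq, hBq⟩ := hq.1.exists_bound
  have hrows : ∀ i k, 0 < k → rowsAtLeast e v p Bp i k = rowsAtLeast e v q Bq i k := by
    intro i k hk
    refine Finset.eq_of_card_eq_of_downClosed (rowKey v) (R := {x | rowHead e v x = i})
      (fun x hx => ((mem_rowsAtLeast hBp hk).mp hx).1)
      (fun x hx => ((mem_rowsAtLeast hBq hk).mp hx).1)
      (fun x hx y hy => hp.mem_rowsAtLeast_of_rowKey_le hv hBp hk hx hy)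
      (fun x hx y hy => hq.mem_rowsAtLeast_of_rowKey_le hv hBq hk hx hy) ?_
    rw [card_rowsAtLeast hBp i hk, card_rowsAtLeast hBq i hk, h]
  funext c j
  have hiff : ∀ k, 0 < k → (k ≤ p c j ↔ k ≤ q c j) := fun k hk => by
    simpa [mem_rowsAtLeast hBp hk, mem_rowsAtLeast hBq hk] using
      congrArg ((c, j) ∈ ·) (hrows (rowHead e v (c, j)) k hk)
  have := hiff (p c j)
  have := hiff (q c j)
  omega

/-- For every multicharge `v ∈ V_l`, the map `f_v` is injective on
FLOTW `l`-partitions. -/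
theorem fv_injective (e : ℕ) (he : 2 ≤ e) {l : ℕ} (hl : 0 < l)
    (v : Fin l → ℤ) (hv : IsMulticharge e v)
    (p q : Fin l → ℕ → ℕ) (hp : FLOTW e v p) (hq : FLOTW e v q)
    (h : fv e v p = fv e v q) :
    p = q :=
  fv_injective_general e v hv p q hp hq h

end AffineA
end
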